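/- For every cotransverse map f : [m] → [n], the induced map T(f) : [0,1]^m → [0,1]^n is non-expansive and quasi-isometric for \vec{d}_1: for all x, y ∈ [0,1]^m, \vec{d}_1(T(f)(x),T(f)(y)) ≤ \vec{d}_1(x,y), with equality whenever \vec{d}_1(x,y) < ∞ (i.e. whenever x ≤ y componentwise). -/

import Mathlib

open scoped ENNReal

instance : Fact ((0:ℝ) ≤ 1) := ⟨zero_le_one⟩

/- The directed metric `d⃗₁` on the vertices `{0,1}^n`. -/
open Classical in
noncomputable def vd {n : ℕ} (x y : Fin n → Bool) : ℝ≥0∞ :=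
  if x ≤ y then ∑ i, (if x i = y i then 0 else 1) else ⊤

def Cotransverse {m n : ℕ} (f : (Fin m → Bool) → (Fin n → Bool)) : Prop :=
  StrictMono f ∧ ∀ x y, vd x y = 1 → vd (f x) (f y) = 1

/-- The topologized map `T(f) : [0,1]^m → [0,1]^n` associated with a map
`f : {0,1}^m → {0,1}^n`, defined coordinatewise by the max-min (sup-inf)
formula, the sup and inf being taken in the complete lattice `[0,1]`
(so `sup ∅ = 0` and `inf ∅ = 1`). -/
noncomputable def Tmap {m n : ℕ} (f : (Fin m → Bool) → (Fin n → Bool))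
    (x : Fin m → unitInterval) : Fin n → unitInterval :=
  fun i => ⨆ (ε : Fin m → Bool) (_ : f ε i = true), ⨅ (k : Fin m) (_ : ε k = true), x k

/- The directed metric `d⃗₁` on the topological cube `[0,1]^n`. -/
open Classical in
noncomputable def dCube {n : ℕ} (x y : Fin n → unitInterval) : ℝ≥0∞ :=
  if x ≤ y then ∑ i, ENNReal.ofReal |(x i : ℝ) - (y i : ℝ)| else ⊤

/-! Thresholding commutes with `T(f)`: the coordinates of `T(f)(x)` that are `≥ t` are the
coordinates of `f` applied to the vertex `{k | t ≤ x k}`. A cotransverse map shifts the Hamming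
weight by the constant `|f(0)|`, so integrating over `t ∈ (0,1]` (layer cake) gives
`∑ᵢ T(f)(x)ᵢ = |f(0)| + ∑ₖ xₖ`. Since `T(f)` is monotone and `d⃗₁(x, y) = ∑ y - ∑ x` for
`x ≤ y`, finite distances are preserved. -/

open MeasureTheory Set Function
open scoped Finset

noncomputable def weight {n : ℕ} (v : Fin n → Bool) : ℕ :=
  #{i | v i = true}

noncomputable def threshold {n : ℕ} (t : ℝ) (x : Fin n → unitInterval) : Fin n → Bool :=
  fun i => decide (t ≤ (x i : ℝ))

section Vertices

variable {n : ℕ}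

lemma weight_cast_eq_sum (v : Fin n → Bool) :
    (weight v : ℝ≥0∞) = ∑ i, if v i = true then 1 else 0 :=
  (Finset.sum_boole _ _).symm

lemma weight_add_vd {a b : Fin n → Bool} (h : vd a b ≠ ⊤) :
    (weight a : ℝ≥0∞) + vd a b = weight b := by
  have hab : a ≤ b := by by_contra hab; simp [vd, hab] at h
  rw [vd, if_pos hab, weight_cast_eq_sum, weight_cast_eq_sum, ← Finset.sum_add_distrib]
  refine Finset.sum_congr rfl fun i _ => ?_
  have hi := hab i
  cases ha : a i <;> cases hb : b i <;> simp_all [Bool.le_iff_imp]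

lemma vd_update_true {ε : Fin n → Bool} {k : Fin n} (hk : ε k = false) :
    vd ε (update ε k true) = 1 := by
  have hle : ε ≤ update ε k true := le_update_iff.2 ⟨le_top, fun _ _ => le_rfl⟩
  have hterm : ∀ i,
      (if ε i = update ε k true i then (0 : ℝ≥0∞) else 1) = if i = k then 1 else 0 := by
    intro i
    by_cases hik : i = k
    · subst hik; simp [hk]
    · simp [hik]
  simp only [vd, if_pos hle, hterm, Finset.sum_ite_eq', Finset.mem_univ, if_true]

lemma induction_update_true {P : (Fin n → Bool) → Prop} (h0 : P ⊥)
    (hstep : ∀ ε k, ε k = false → P ε → P (update ε k true)) (ε : Fin n → Bool) : P ε := by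
  have key : ∀ s : Finset (Fin n), P fun k => decide (k ∈ s) := by
    intro s
    induction s using Finset.induction with
    | empty =>
      simp only [Finset.notMem_empty, decide_false]
      exact h0
    | insert a s ha ih =>
      convert hstep _ a (by simpa using ha) ih using 1
      funext k
      by_cases hka : k = a
      · subst hka; simp
      · simp [hka]
  simpa using key {k | ε k = true}

end Vertices

lemma Cotransverse.weight_apply {m n : ℕ} {f : (Fin m → Bool) → (Fin n → Bool)}
    (hf : Cotransverse f) (ε : Fin m → Bool) :
    (weight (f ε) : ℝ≥0∞) = weight (f ⊥) + weight ε := by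
  induction ε using induction_update_true with
  | h0 => simp [weight]
  | hstep ε k hk ih =>
    have hv := vd_update_true hk
    have hfv := hf.2 _ _ hv
    have hw := weight_add_vd (hv ▸ ENNReal.one_ne_top)
    have hfw := weight_add_vd (hfv ▸ ENNReal.one_ne_top)
    rw [hv] at hw
    rw [hfv] at hfw
    rw [← hw, ← hfw, ih, add_assoc]

lemma le_Tmap_iff {m n : ℕ} (f : (Fin m → Bool) → (Fin n → Bool)) (x : Fin m → unitInterval)
    (i : Fin n) {τ : unitInterval} (hτ : 0 < τ) :
    τ ≤ Tmap f x i ↔ ∃ ε, f ε i = true ∧ ∀ k, ε k = true → τ ≤ x k := by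
  constructor
  · intro h
    obtain ⟨ε, hmax⟩ := Finite.exists_max
      fun ε : Fin m → Bool => ⨆ (_ : f ε i = true), ⨅ (k : Fin m) (_ : ε k = true), x k
    have hτε := h.trans (iSup_le hmax)
    by_cases hfε : f ε i = true
    · rw [iSup_pos hfε] at hτε
      exact ⟨ε, hfε, le_iInf₂_iff.1 hτε⟩
    · rw [iSup_neg hfε] at hτε
      exact absurd hτε (not_le.2 hτ)
  · rintro ⟨ε, hfε, hε⟩
    exact le_iSup₂_of_le ε hfε (le_iInf₂ hε)

lemma threshold_Tmap {m n : ℕ} {f : (Fin m → Bool) → (Fin n → Bool)} (hf : Monotone f)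
    (x : Fin m → unitInterval) {t : ℝ} (ht : t ∈ Ioc 0 1) :
    threshold t (Tmap f x) = f (threshold t x) := by
  funext i
  set τ : unitInterval := ⟨t, ht.1.le, ht.2⟩
  change decide (τ ≤ Tmap f x i) = f (fun k => decide (τ ≤ x k)) i
  rw [Bool.eq_iff_iff, decide_eq_true_iff, le_Tmap_iff f x i (show 0 < τ from ht.1)]
  constructor
  · rintro ⟨ε, hfε, hε⟩
    have hle : ε ≤ fun k => decide (τ ≤ x k) := fun k =>
      Bool.le_iff_imp.2 fun hk => decide_eq_true (hε k hk)
    simpa [hfε, Bool.le_iff_imp] using hf hle i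
  · exact fun h => ⟨_, h, fun k hk => of_decide_eq_true hk⟩

lemma lintegral_indicator_Iic {a : ℝ} (ha : a ∈ Icc 0 1) :
    ∫⁻ t in Ioc 0 1, (Iic a).indicator 1 t = ENNReal.ofReal a := by
  rw [lintegral_indicator_one measurableSet_Iic, Measure.restrict_apply measurableSet_Iic,
    Iic_inter_Ioc_of_le ha.2, Real.volume_Ioc, sub_zero]

lemma sum_ofReal_eq_lintegral_weight_threshold {n : ℕ} (x : Fin n → unitInterval) :
    ∑ i, ENNReal.ofReal (x i) = ∫⁻ t in Ioc 0 1, (weight (threshold t x) : ℝ≥0∞) := by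
  have hweight : ∀ t, (weight (threshold t x) : ℝ≥0∞) = ∑ i, (Iic (x i : ℝ)).indicator 1 t := by
    intro t
    simp only [weight_cast_eq_sum, threshold, decide_eq_true_iff, indicator_apply, mem_Iic,
      Pi.one_apply]
  simp_rw [hweight]
  rw [lintegral_finsetSum _ fun i _ => measurable_one.indicator measurableSet_Iic]
  exact Finset.sum_congr rfl fun i _ => (lintegral_indicator_Iic (x i).2).symm

lemma Cotransverse.sum_Tmap {m n : ℕ} {f : (Fin m → Bool) → (Fin n → Bool)}
    (hf : Cotransverse f) (x : Fin m → unitInterval) :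
    ∑ i, ENNReal.ofReal (Tmap f x i) = weight (f ⊥) + ∑ k, ENNReal.ofReal (x k) := by
  calc ∑ i, ENNReal.ofReal (Tmap f x i)
      = ∫⁻ t in Ioc 0 1, (weight (f (threshold t x)) : ℝ≥0∞) := by
        rw [sum_ofReal_eq_lintegral_weight_threshold]
        exact setLIntegral_congr_fun measurableSet_Ioc fun t ht => by
          rw [threshold_Tmap hf.1.monotone x ht]
    _ = ∫⁻ t in Ioc 0 1, ((weight (f ⊥) : ℝ≥0∞) + weight (threshold t x)) :=
        lintegral_congr fun t => mod_cast hf.weight_apply _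
    _ = weight (f ⊥) + ∑ k, ENNReal.ofReal (x k) := by
        rw [lintegral_add_left measurable_const, setLIntegral_const, Real.volume_Ioc,
          sub_zero, ENNReal.ofReal_one, mul_one, sum_ofReal_eq_lintegral_weight_threshold]

lemma Tmap_mono {m n : ℕ} (f : (Fin m → Bool) → (Fin n → Bool)) : Monotone (Tmap f) :=
  fun _ _ hxy _ => iSup₂_mono fun _ _ => iInf₂_mono fun k _ => hxy k

lemma dCube_of_le {n : ℕ} {x y : Fin n → unitInterval} (hxy : x ≤ y) :
    dCube x y = ∑ i, ENNReal.ofReal (y i) - ∑ i, ENNReal.ofReal (x i) := by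
  refine ENNReal.eq_sub_of_add_eq (ENNReal.sum_ne_top.2 fun _ _ => ENNReal.ofReal_ne_top) ?_
  rw [dCube, if_pos hxy, ← Finset.sum_add_distrib]
  refine Finset.sum_congr rfl fun i _ => ?_
  have hi : (x i : ℝ) ≤ y i := hxy i
  rw [abs_sub_comm, abs_of_nonneg (sub_nonneg.2 hi), ← ENNReal.ofReal_add (sub_nonneg.2 hi)
    (x i).2.1, sub_add_cancel]

/-- For every cotransverse map `f : [m] → [n]`, the map `T(f)` is
non-expansive for `d⃗₁` and quasi-isometric: it preserves finite distances. -/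
theorem stmt9 (m n : ℕ) (f : (Fin m → Bool) → (Fin n → Bool))
    (hf : Cotransverse f) :
    ∀ x y : Fin m → unitInterval,
      dCube (Tmap f x) (Tmap f y) ≤ dCube x y ∧
      (dCube x y ≠ ⊤ → dCube (Tmap f x) (Tmap f y) = dCube x y) := by
  intro x y
  by_cases hxy : x ≤ y
  · have heq : dCube (Tmap f x) (Tmap f y) = dCube x y := by
      rw [dCube_of_le (Tmap_mono f hxy), dCube_of_le hxy, hf.sum_Tmap, hf.sum_Tmap,
        ENNReal.add_sub_add_eq_sub_left (ENNReal.natCast_ne_top _)]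
    exact ⟨heq.le, fun _ => heq⟩
  · have htop : dCube x y = ⊤ := if_neg hxy
    exact ⟨htop ▸ le_top, fun h => absurd htop h⟩
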